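/- arXiv:1412.3987 — 2 statements merged into one kernel-verified Lean document; each statement's English description precedes it below -/
import Mathlib

section
/- Let P, Q ⊆ ℝ^d be polytopes. Then every edge direction of the Minkowski sum P + Q is an edge direction of P or an edge direction of Q; that is, every edge of P + Q is parallel to an edge of P or to an edge of Q. -/
/-!
Let `[v, w]` be an edge of `P + Q` and write `v = p₀ + q₀`, `w = p₁ + q₁`. The midpoint of
`p₀ + q₁` and `p₁ + q₀` is the midpoint of the edge, so by extremality both points lie on the
edge. Hence `{p ∈ P | p + q₀ ∈ [v, w]}` and `{q ∈ Q | p₀ + q ∈ [v, w]}` are faces of `P` and `Q`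
lying on translates of `[v, w]`, and one of them is not a point since `p₀ ≠ p₁` or `q₀ ≠ q₁`.
A closed convex set contained in a segment is itself a segment, so that face is an edge
parallel to `[v, w]`.
-/

open scoped Pointwise

def IsPolytope {d : ℕ} (P : Set (EuclideanSpace ℝ (Fin d))) : Prop :=
  ∃ S : Finset (EuclideanSpace ℝ (Fin d)), S.Nonempty ∧ P = convexHull ℝ (S : Set (EuclideanSpace ℝ (Fin d)))

/-- The segment `[v,w]` with `v ≠ w` is an edge of `P` (a face, i.e. an extreme subset). -/
def IsEdge {d : ℕ} (P : Set (EuclideanSpace ℝ (Fin d)))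
    (v w : EuclideanSpace ℝ (Fin d)) : Prop :=
  v ≠ w ∧ IsExtreme ℝ P (segment ℝ v w)

/-- `e` is an edge direction of `P`: a positive scalar multiple of `w - v`
for some edge `[v,w]` of `P`. -/
def IsEdgeDir {d : ℕ} (P : Set (EuclideanSpace ℝ (Fin d)))
    (e : EuclideanSpace ℝ (Fin d)) : Prop :=
  ∃ v w, IsEdge P v w ∧ ∃ t : ℝ, 0 < t ∧ e = t • (w - v)

open Set AffineMap

theorem Convex.exists_eq_segment_lineMap_of_subset_segment {E : Type*} [AddCommGroup E]
    [Module ℝ E] [TopologicalSpace E] [IsTopologicalAddGroup E] [ContinuousSMul ℝ E]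
    {G : Set E} {x y : E} (hconv : Convex ℝ G) (hclosed : IsClosed G) (hne : G.Nonempty)
    (hsub : G ⊆ segment ℝ x y) :
    ∃ s t : ℝ, s ≤ t ∧ G = segment ℝ (lineMap x y s) (lineMap x y t) := by
  set T : Set ℝ := lineMap x y ⁻¹' G ∩ Icc 0 1
  have hGT : G = lineMap x y '' T := by
    rw [image_preimage_inter, inter_eq_left.mpr (segment_eq_image_lineMap ℝ x y ▸ hsub)]
  have hTne : T.Nonempty := (hGT ▸ hne).of_image
  have hT : T = Icc (sInf T) (sSup T) :=
    eq_Icc_of_connected_compact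
      (((hconv.affine_preimage (lineMap x y)).inter (convex_Icc 0 1)).isConnected hTne)
      (isCompact_Icc.inter_left (hclosed.preimage lineMap_continuous))
  have hle : sInf T ≤ sSup T := nonempty_Icc.mp (hT ▸ hTne)
  refine ⟨sInf T, sSup T, hle, ?_⟩
  rw [← image_segment, segment_eq_Icc hle, ← hT, hGT]

section Extreme

variable {𝕜 E : Type*} [Field 𝕜] [LinearOrder 𝕜] [IsStrictOrderedRing 𝕜] [AddCommGroup E]
  [Module 𝕜 E] {A B F : Set E}

theorem IsExtreme.inter_preimage_add_left (hF : IsExtreme 𝕜 (A + B) F) {a : E} (ha : a ∈ A) :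
    IsExtreme 𝕜 B (B ∩ (a + ·) ⁻¹' F) := by
  refine ⟨inter_subset_left, fun x₁ hx₁ x₂ hx₂ x hx hxs ↦ ⟨hx₁, ?_⟩⟩
  exact hF.left_mem_of_mem_openSegment (add_mem_add ha hx₁) (add_mem_add ha hx₂) hx.2
    ((mem_openSegment_translate 𝕜 a).mpr hxs)

theorem IsExtreme.add_mem_swap (hF : IsExtreme 𝕜 (A + B) F) (hFc : Convex 𝕜 F)
    {a₀ a₁ b₀ b₁ : E} (ha₀ : a₀ ∈ A) (ha₁ : a₁ ∈ A) (hb₀ : b₀ ∈ B) (hb₁ : b₁ ∈ B)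
    (h₀ : a₀ + b₀ ∈ F) (h₁ : a₁ + b₁ ∈ F) : a₀ + b₁ ∈ F ∧ a₁ + b₀ ∈ F := by
  have hhalf : (2⁻¹ : 𝕜) + 2⁻¹ = 1 := by norm_num
  have hmid : (2⁻¹ : 𝕜) • (a₀ + b₁) + (2⁻¹ : 𝕜) • (a₁ + b₀)
      = (2⁻¹ : 𝕜) • (a₀ + b₀) + (2⁻¹ : 𝕜) • (a₁ + b₁) := by module
  have hmem : (2⁻¹ : 𝕜) • (a₀ + b₁) + (2⁻¹ : 𝕜) • (a₁ + b₀) ∈ F := by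
    rw [hmid]
    exact hFc h₀ h₁ (by norm_num) (by norm_num) hhalf
  have hseg : (2⁻¹ : 𝕜) • (a₀ + b₁) + (2⁻¹ : 𝕜) • (a₁ + b₀)
      ∈ openSegment 𝕜 (a₀ + b₁) (a₁ + b₀) := ⟨2⁻¹, 2⁻¹, by norm_num, by norm_num, hhalf, rfl⟩
  exact ⟨hF.left_mem_of_mem_openSegment (add_mem_add ha₀ hb₁) (add_mem_add ha₁ hb₀) hmem hseg,
    hF.right_mem_of_mem_openSegment (add_mem_add ha₀ hb₁) (add_mem_add ha₁ hb₀) hmem hseg⟩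

end Extreme

section Polytope

variable {d : ℕ} {P Q : Set (EuclideanSpace ℝ (Fin d))}

theorem IsPolytope.isClosed (hP : IsPolytope P) : IsClosed P := by
  obtain ⟨S, -, rfl⟩ := hP
  exact (S.finite_toSet.isCompact_convexHull ℝ).isClosed

theorem IsPolytope.convex (hP : IsPolytope P) : Convex ℝ P := by
  obtain ⟨S, -, rfl⟩ := hP
  exact convex_convexHull ℝ _

theorem IsEdgeDir.smul {e : EuclideanSpace ℝ (Fin d)} (he : IsEdgeDir P e) {c : ℝ} (hc : 0 < c) :
    IsEdgeDir P (c • e) := by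
  obtain ⟨v, w, hvw, t, ht, rfl⟩ := he
  exact ⟨v, w, hvw, c * t, mul_pos hc ht, smul_smul c t _⟩

theorem IsExtreme.isEdgeDir_of_subset_segment {G : Set (EuclideanSpace ℝ (Fin d))}
    (hext : IsExtreme ℝ P G) (hconv : Convex ℝ G) (hclosed : IsClosed G) (hnt : G.Nontrivial)
    {x y : EuclideanSpace ℝ (Fin d)} (hsub : G ⊆ segment ℝ x y) : IsEdgeDir P (y - x) := by
  obtain ⟨s, t, hle, hG⟩ :=
    hconv.exists_eq_segment_lineMap_of_subset_segment hclosed hnt.nonempty hsub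
  have hne : lineMap x y s ≠ lineMap x y t := by
    intro h
    rw [h, segment_same] at hG
    exact hnt.not_subsingleton (hG ▸ subsingleton_singleton)
  have hst : 0 < t - s := sub_pos.mpr (hle.lt_of_ne fun h ↦ hne (h ▸ rfl))
  have hdir : lineMap x y t - lineMap x y s = (t - s) • (y - x) := by
    simp only [lineMap_apply_module']
    module
  exact ⟨_, _, ⟨hne, hG ▸ hext⟩, (t - s)⁻¹, inv_pos.mpr hst,
    by rw [hdir, inv_smul_smul₀ hst.ne']⟩

theorem IsEdge.isEdgeDir_right_of_add {v w p q₀ q₁ : EuclideanSpace ℝ (Fin d)}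
    (hF : IsEdge (P + Q) v w) (hQc : IsClosed Q) (hQv : Convex ℝ Q) (hp : p ∈ P)
    (hq₀ : q₀ ∈ Q) (hq₁ : q₁ ∈ Q) (hv : p + q₀ = v) (h₁ : p + q₁ ∈ segment ℝ v w)
    (hne : q₀ ≠ q₁) : IsEdgeDir Q (w - v) := by
  set G := Q ∩ (p + ·) ⁻¹' segment ℝ v w
  have hclosed : IsClosed G := by
    refine hQc.inter (IsClosed.preimage (continuous_const_add p) ?_)
    rw [segment_eq_image_lineMap]
    exact (isCompact_Icc.image lineMap_continuous).isClosed
  have hsub : G ⊆ segment ℝ (v - p) (w - p) := fun q hq ↦ by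
    rw [← mem_segment_translate ℝ p, add_sub_cancel, add_sub_cancel]
    exact hq.2
  have hnt : G.Nontrivial :=
    ⟨q₀, ⟨hq₀, by simp only [mem_preimage, hv, left_mem_segment]⟩, q₁, ⟨hq₁, h₁⟩, hne⟩
  simpa only [sub_sub_sub_cancel_right] using
    (hF.2.inter_preimage_add_left hp).isEdgeDir_of_subset_segment
      (hQv.inter ((convex_segment v w).translate_preimage_right p)) hclosed hnt hsub

end Polytope

theorem minkowski_sum_edge_directions {d : ℕ}
    (P Q : Set (EuclideanSpace ℝ (Fin d))) (hP : IsPolytope P) (hQ : IsPolytope Q) :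
    ∀ e, IsEdgeDir (P + Q) e → IsEdgeDir P e ∨ IsEdgeDir Q e := by
  rintro e ⟨v, w, hF, t, ht, rfl⟩
  obtain ⟨p₀, hp₀, q₀, hq₀, hv : p₀ + q₀ = v⟩ := hF.2.subset (left_mem_segment ℝ v w)
  obtain ⟨p₁, hp₁, q₁, hq₁, hw : p₁ + q₁ = w⟩ := hF.2.subset (right_mem_segment ℝ v w)
  obtain ⟨h₀₁, h₁₀⟩ := hF.2.add_mem_swap (convex_segment v w) hp₀ hp₁ hq₀ hq₁
    (hv ▸ left_mem_segment ℝ v w) (hw ▸ right_mem_segment ℝ v w)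
  by_cases hq : q₀ = q₁
  · have hp : p₀ ≠ p₁ := by
      rintro rfl
      exact hF.1 (hv.symm.trans (hq ▸ hw))
    have hF' : IsEdge (Q + P) v w := add_comm P Q ▸ hF
    left
    exact (hF'.isEdgeDir_right_of_add hP.isClosed hP.convex hq₀ hp₀ hp₁ (by rw [add_comm, hv])
      (by rwa [add_comm]) hp).smul ht
  · right
    exact (hF.isEdgeDir_right_of_add hQ.isClosed hQ.convex hp₀ hq₀ hq₁ hv h₀₁ hq).smul ht
end

section
/- Let P_1, …, P_r ⊆ ℝ^d be polytopes, let s_1, …, s_r ∈ {−1, +1}, and let P ⊆ ℝ^d be a polytope such that P + Σ_{i : s_i = −1} P_i = Σ_{i : s_i = +1} P_i (Minkowski sums), i.e. P is the signed Minkowski sum s_1 P_1 + ⋯ + s_r P_r. Then every edge direction of P is an edge direction of some summand P_i with s_i = +1; in symbols, D(P) ⊆ ⋃_{i : s_i = +1} D(P_i). -/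
open scoped BigOperators Pointwise

/-!
Let `l` be a functional exposing the edge `[v, w]` of `P`; edges of polytopes are exposed faces
since `P \ [v, w]` is convex and meets the line through `v` and `w` nowhere. Taking `l`-faces
commutes with Minkowski sums, so the `l`-faces of the positive summands add up to `[v, w] + conv T`
for a finite set `T`. As long as `T` does not lie on a line parallel to `w - v`, pass to the face
for a functional that vanishes on `w - v` but is not constant on `T`: this keeps `[v, w]` and
shrinks `T`. Once the sum is a segment parallel to `w - v`, one of the summands is a nondegenerate
segment parallel to it; as an iterated exposed face of a positive summand, it is an edge of it.
-/

open Set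

namespace ContinuousLinearMap

variable {E : Type*} [AddCommGroup E] [TopologicalSpace E] [Module ℝ E] (l : StrongDual ℝ E)

theorem toExposed_add (A B : Set E) : l.toExposed (A + B) = l.toExposed A + l.toExposed B := by
  ext x
  constructor
  · rintro ⟨⟨a, ha, b, hb, rfl⟩, hmax⟩
    refine ⟨a, ⟨ha, fun a' ha' => ?_⟩, b, ⟨hb, fun b' hb' => ?_⟩, rfl⟩
    · simpa using hmax _ (add_mem_add ha' hb)
    · simpa using hmax _ (add_mem_add ha hb')
  · rintro ⟨a, ⟨ha, hamax⟩, b, ⟨hb, hbmax⟩, rfl⟩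
    refine ⟨add_mem_add ha hb, ?_⟩
    rintro _ ⟨a', ha', b', hb', rfl⟩
    simpa using add_le_add (hamax a' ha') (hbmax b' hb')

theorem toExposed_sum {ι : Type*} (I : Finset ι) (A : ι → Set E) :
    l.toExposed (∑ i ∈ I, A i) = ∑ i ∈ I, l.toExposed (A i) := by
  classical
  induction I using Finset.induction_on with
  | empty => ext; simp +contextual [toExposed]
  | insert j I hj ih => rw [Finset.sum_insert hj, Finset.sum_insert hj, toExposed_add, ih]

theorem toExposed_nonempty {S : Set E} (hS : S.Finite) (hne : S.Nonempty) :
    (l.toExposed S).Nonempty :=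
  let ⟨s, hs, hmax⟩ := S.exists_max_image l hS hne
  ⟨s, hs, hmax⟩

theorem le_of_mem_convexHull {S : Set E} {c : ℝ} (hS : ∀ s ∈ S, l s ≤ c) {x : E}
    (hx : x ∈ convexHull ℝ S) : l x ≤ c := by
  obtain ⟨s, hs, hxs⟩ := (l.toLinearMap.convexOn convex_univ).exists_ge_of_mem_convexHull
    (subset_univ S) hx
  exact hxs.trans (hS s hs)

theorem apply_eq_of_mem_segment {v w x : E} (hl : l (w - v) = 0)
    (hx : x ∈ segment ℝ v w) : l x = l v := by
  rw [segment_eq_image_lineMap] at hx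
  obtain ⟨θ, -, rfl⟩ := hx
  simp [AffineMap.lineMap_apply_module', hl]

theorem toExposed_segment {v w : E} (hl : l (w - v) = 0) :
    l.toExposed (segment ℝ v w) = segment ℝ v w :=
  subset_antisymm (sep_subset _ _) fun _ hx =>
    ⟨hx, fun _ hy => ((l.apply_eq_of_mem_segment hl hy).trans
      (l.apply_eq_of_mem_segment hl hx).symm).le⟩

end ContinuousLinearMap

theorem IsExtreme.lineMap_mem_segment {E : Type*} [AddCommGroup E] [Module ℝ E] {A : Set E}
    {v w : E} (h : IsExtreme ℝ A (segment ℝ v w)) {β : ℝ} (hβ : AffineMap.lineMap v w β ∈ A) :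
    AffineMap.lineMap v w β ∈ segment ℝ v w := by
  have hv : v ∈ segment ℝ v w := left_mem_segment ℝ v w
  have hw : w ∈ segment ℝ v w := right_mem_segment ℝ v w
  have hopen : ∀ {a b c : ℝ}, a < b → b < c → AffineMap.lineMap v w b ∈
      openSegment ℝ (AffineMap.lineMap v w a) (AffineMap.lineMap v w c) := fun hab hbc => by
    rw [← image_openSegment, openSegment_eq_Ioo (hab.trans hbc)]
    exact mem_image_of_mem _ ⟨hab, hbc⟩
  rcases lt_or_ge β 0 with hβ0 | hβ0
  · have := hopen hβ0 zero_lt_one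
    rw [AffineMap.lineMap_apply_zero, AffineMap.lineMap_apply_one] at this
    exact h.left_mem_of_mem_openSegment hβ (h.1 hw) hv this
  rcases le_or_gt β 1 with hβ1 | hβ1
  · rw [segment_eq_image_lineMap]
    exact mem_image_of_mem _ ⟨hβ0, hβ1⟩
  · have := hopen zero_lt_one hβ1
    rw [AffineMap.lineMap_apply_zero, AffineMap.lineMap_apply_one] at this
    exact h.right_mem_of_mem_openSegment (h.1 hv) hβ hw this

section NormedSpace

variable {E : Type*} [NormedAddCommGroup E] [NormedSpace ℝ E]

theorem ContinuousLinearMap.toExposed_convexHull (l : StrongDual ℝ E) {S : Set E} (hS : S.Finite) :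
    l.toExposed (convexHull ℝ S) = convexHull ℝ (l.toExposed S) := by
  have hexp : IsExposed ℝ (convexHull ℝ S) (l.toExposed (convexHull ℝ S)) :=
    ContinuousLinearMap.toExposed.isExposed
  have hconv := hexp.convex (convex_convexHull ℝ S)
  refine subset_antisymm ?_ (convexHull_min ?_ hconv)
  · have hext : (l.toExposed (convexHull ℝ S)).extremePoints ℝ ⊆ l.toExposed S := fun y hy =>
      have hyS := extremePoints_convexHull_subset (hexp.isExtreme.extremePoints_subset_extremePoints hy)
      ⟨hyS, fun z hz => hy.1.2 z (subset_convexHull ℝ S hz)⟩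
    calc l.toExposed (convexHull ℝ S)
        = closure (convexHull ℝ ((l.toExposed (convexHull ℝ S)).extremePoints ℝ)) :=
          (closure_convexHull_extremePoints (hexp.isCompact (hS.isCompact_convexHull ℝ)) hconv).symm
      _ ⊆ closure (convexHull ℝ (l.toExposed S)) := closure_mono (convexHull_mono hext)
      _ = convexHull ℝ (l.toExposed S) :=
          ((hS.subset (sep_subset _ _)).isCompact_convexHull ℝ).isClosed.closure_eq
  · exact fun s hs => ⟨subset_convexHull ℝ S hs.1, fun y hy => l.le_of_mem_convexHull hs.2 hy⟩

theorem exists_eq_segment_of_subset_line {K : Set E} {a e : E} (hne : K.Nonempty)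
    (hc : IsCompact K) (hv : Convex ℝ K) (hK : K ⊆ range fun r : ℝ => a + r • e) :
    ∃ b : E, ∃ c : ℝ, 0 ≤ c ∧ K = segment ℝ b (b + c • e) := by
  rcases eq_or_ne e 0 with rfl | he
  · refine ⟨a, 0, le_rfl, ?_⟩
    rw [zero_smul, add_zero, segment_same]
    exact hne.subset_singleton_iff.1 (by simpa using hK)
  obtain ⟨u, -, hu⟩ := exists_dual_vector ℝ e (norm_ne_zero_iff.2 he)
  have hmono : ∀ r r' : ℝ, u (a + r • e) ≤ u (a + r' • e) ↔ r ≤ r' := fun r r' => by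
    have : 0 < u e := by simpa [hu] using he
    simp [mul_le_mul_iff_of_pos_right this]
  obtain ⟨p, hp, hmin⟩ := hc.exists_isMinOn hne u.continuous.continuousOn
  obtain ⟨q, hq, hmax⟩ := hc.exists_isMaxOn hne u.continuous.continuousOn
  obtain ⟨s, rfl⟩ := hK hp
  obtain ⟨t, rfl⟩ := hK hq
  have hIcc : ∀ r : ℝ, a + r • e ∈ K → r ∈ Icc s t := fun r hr =>
    ⟨(hmono _ _).1 (hmin hr), (hmono _ _).1 (hmax hr)⟩
  have hst : s ≤ t := (hIcc t hq).1
  refine ⟨a + s • e, t - s, sub_nonneg.2 hst, ?_⟩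
  rw [show a + s • e + (t - s) • e = a + t • e by module]
  refine subset_antisymm ?_ (hv.segment_subset hp hq)
  rintro _ hz
  obtain ⟨r, rfl⟩ := hK hz
  have hφ : ∀ r : ℝ, AffineMap.lineMap a (a + e) r = a + r • e := fun r => by
    rw [AffineMap.lineMap_apply_module', add_sub_cancel_left, add_comm]
  rw [← hφ, ← hφ, ← image_segment, segment_eq_Icc hst]
  exact ⟨r, hIcc r hz, hφ r⟩

theorem geometric_hahn_banach_closed_point_of_add_smul_mem {C : Set E} {x e : E}
    (hC : Convex ℝ C) (hCc : IsClosed C) (hx : x ∉ C) (hCe : ∀ c ∈ C, ∀ t : ℝ, c + t • e ∈ C) :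
    ∃ f : StrongDual ℝ E, f e = 0 ∧ ∀ c ∈ C, f c < f x := by
  rcases C.eq_empty_or_nonempty with rfl | ⟨c₀, hc₀⟩
  · exact ⟨0, rfl, by simp⟩
  obtain ⟨f, u, hfu, hux⟩ := geometric_hahn_banach_closed_point hC hCc hx
  refine ⟨f, ?_, fun c hc => (hfu c hc).trans hux⟩
  by_contra hfe
  have := hfu _ (hCe c₀ hc₀ ((u - f c₀) / f e))
  rw [map_add, map_smul, smul_eq_mul, div_mul_cancel₀ _ hfe] at this
  linarith

theorem exists_toExposed_convexHull_eq_segment {S : Set E} (hS : S.Finite) {v w : E}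
    (h : IsExtreme ℝ (convexHull ℝ S) (segment ℝ v w)) :
    ∃ l : StrongDual ℝ E, l.toExposed (convexHull ℝ S) = segment ℝ v w := by
  set U := S \ segment ℝ v w
  have hU : convexHull ℝ U ⊆ convexHull ℝ S \ segment ℝ v w :=
    convexHull_min (sdiff_subset_sdiff_left (subset_convexHull ℝ S))
      (h.convex_sdiff (convex_convexHull ℝ S))
  have hvC : v ∉ convexHull ℝ U + (ℝ ∙ (w - v) : Set E) := by
    rintro ⟨y, hy, _, hz, hyz⟩
    obtain ⟨c, rfl⟩ := Submodule.mem_span_singleton.1 hz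
    have hy' : y = AffineMap.lineMap v w (-c) := by
      rw [AffineMap.lineMap_apply_module', eq_sub_of_add_eq hyz]
      module
    exact (hU hy).2 (hy' ▸ h.lineMap_mem_segment (hy' ▸ (hU hy).1))
  obtain ⟨f, hfe, hfC⟩ := geometric_hahn_banach_closed_point_of_add_smul_mem
    ((convex_convexHull ℝ U).add (Submodule.convex _))
    ((Submodule.closed_of_finiteDimensional _).add_left_of_isCompact
      ((hS.subset sdiff_subset).isCompact_convexHull ℝ)) hvC
    (by
      rintro _ ⟨y, hy, z, hz, rfl⟩ t
      exact ⟨y, hy, z + t • (w - v),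
        add_mem hz (Submodule.smul_mem _ _ (Submodule.mem_span_singleton_self _)), (add_assoc _ _ _).symm⟩)
  have hfU : ∀ s ∈ U, f s < f v := fun s hs =>
    hfC s ⟨s, subset_convexHull ℝ U hs, 0, zero_mem _, add_zero s⟩
  have hfseg : ∀ x ∈ segment ℝ v w, f x = f v := fun _ => f.apply_eq_of_mem_segment hfe
  have hfS : ∀ s ∈ S, f s ≤ f v := fun s hs => by
    by_cases hseg : s ∈ segment ℝ v w
    · exact (hfseg s hseg).le
    · exact (hfU s ⟨hs, hseg⟩).le
  refine ⟨f, subset_antisymm ?_ fun x hx =>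
    ⟨h.1 hx, fun y hy => (f.le_of_mem_convexHull hfS hy).trans (hfseg x hx).ge⟩⟩
  rw [f.toExposed_convexHull hS]
  refine convexHull_min (fun s hs => ?_) (convex_segment v w)
  by_contra hseg
  have hvs : f v ≤ f s := f.le_of_mem_convexHull hs.2 (h.1 (left_mem_segment ℝ v w))
  exact (hfU s ⟨hs.1, hseg⟩).not_ge hvs

end NormedSpace

section Euclidean

variable {d : ℕ}

local notation "𝔼" => EuclideanSpace ℝ (Fin d)

theorem isEdgeDir_smul_iff {P : Set 𝔼} {e : 𝔼} {c : ℝ} (hc : 0 < c) :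
    IsEdgeDir P (c • e) ↔ IsEdgeDir P e := by
  constructor
  · rintro ⟨v, w, hE, t, ht, he⟩
    refine ⟨v, w, hE, c⁻¹ * t, mul_pos (inv_pos.2 hc) ht, ?_⟩
    rw [mul_smul, ← he, smul_smul, inv_mul_cancel₀ hc.ne', one_smul]
  · rintro ⟨v, w, hE, t, ht, rfl⟩
    exact ⟨v, w, hE, c * t, mul_pos hc ht, smul_smul c t _⟩

theorem isEdgeDir_segment {v w : 𝔼} (hvw : v ≠ w) : IsEdgeDir (segment ℝ v w) (w - v) :=
  ⟨v, w, ⟨hvw, IsExtreme.rfl⟩, 1, one_pos, (one_smul ℝ _).symm⟩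

theorem IsEdgeDir.of_toExposed {P : Set 𝔼} {e : 𝔼} {l : StrongDual ℝ 𝔼}
    (h : IsEdgeDir (l.toExposed P) e) : IsEdgeDir P e :=
  let ⟨v, w, ⟨hvw, hext⟩, hdir⟩ := h
  ⟨v, w, ⟨hvw, ContinuousLinearMap.toExposed.isExposed.isExtreme.trans hext⟩, hdir⟩

theorem IsPolytope.add {A B : Set 𝔼} (hA : IsPolytope A) (hB : IsPolytope B) :
    IsPolytope (A + B) := by
  obtain ⟨S, hS, rfl⟩ := hA
  obtain ⟨T, hT, rfl⟩ := hB
  exact ⟨S + T, hS.add hT, by rw [Finset.coe_add, convexHull_add]⟩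

theorem isPolytope_zero : IsPolytope (0 : Set 𝔼) :=
  ⟨{0}, Finset.singleton_nonempty 0, by simp [← Set.singleton_zero]⟩

theorem isPolytope_sum {ι : Type*} (I : Finset ι) {P : ι → Set 𝔼} (hP : ∀ i ∈ I, IsPolytope (P i)) :
    IsPolytope (∑ i ∈ I, P i) :=
  Finset.sum_induction P IsPolytope (fun _ _ => IsPolytope.add) isPolytope_zero hP

theorem IsPolytope.toExposed {P : Set 𝔼} (hP : IsPolytope P) (l : StrongDual ℝ 𝔼) :
    IsPolytope (l.toExposed P) := by
  obtain ⟨S, hne, rfl⟩ := hP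
  have hfin : (l.toExposed (S : Set 𝔼)).Finite := S.finite_toSet.subset (sep_subset _ _)
  refine ⟨hfin.toFinset, ?_, ?_⟩
  · simpa using l.toExposed_nonempty S.finite_toSet hne
  · rw [hfin.coe_toFinset, l.toExposed_convexHull S.finite_toSet]

theorem exists_isEdgeDir_of_sum_eq_segment {ι : Type*} (I : Finset ι) {F : ι → Set 𝔼}
    (hF : ∀ i ∈ I, IsPolytope (F i)) {p q : 𝔼} (hpq : p ≠ q)
    (hsum : ∑ i ∈ I, F i = segment ℝ p q) : ∃ i ∈ I, IsEdgeDir (F i) (q - p) := by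
  classical
  induction I using Finset.induction_on generalizing p q with
  | empty =>
    rw [Finset.sum_empty] at hsum
    have hp : p ∈ (0 : Set 𝔼) := hsum ▸ left_mem_segment ℝ p q
    have hq : q ∈ (0 : Set 𝔼) := hsum ▸ right_mem_segment ℝ p q
    exact absurd ((mem_zero.1 hp).trans (mem_zero.1 hq).symm) hpq
  | insert j I hj ih =>
    rw [Finset.sum_insert hj] at hsum
    obtain ⟨a₀, ha₀, b₀, hb₀, -⟩ := hsum ▸ left_mem_segment ℝ p q
    have hline : F j ⊆ range fun r : ℝ => (p - b₀) + r • (q - p) := fun x hx => by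
      have hxb : x + b₀ ∈ segment ℝ p q := hsum ▸ add_mem_add hx hb₀
      rw [segment_eq_image'] at hxb
      obtain ⟨θ, -, hθ⟩ := hxb
      exact ⟨θ, by simp only [sub_add_eq_add_sub, hθ, add_sub_cancel_right]⟩
    obtain ⟨S, -, hS⟩ := hF j (Finset.mem_insert_self j I)
    obtain ⟨b, c, hc, hFj⟩ := exists_eq_segment_of_subset_line ⟨a₀, ha₀⟩
      (hS ▸ S.finite_toSet.isCompact_convexHull ℝ) (hS ▸ convex_convexHull ℝ _) hline
    rcases hc.eq_or_lt with rfl | hc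
    · rw [zero_smul, add_zero, segment_same] at hFj
      rw [hFj, singleton_add] at hsum
      have hrest : ∑ i ∈ I, F i = segment ℝ (-b + p) (-b + q) := by
        rw [← segment_translate_image, ← hsum, image_image]
        simp
      obtain ⟨i, hi, hedge⟩ :=
        ih (fun i hi => hF i (Finset.mem_insert_of_mem hi)) (by simpa using hpq) hrest
      exact ⟨i, Finset.mem_insert_of_mem hi, by simpa using hedge⟩
    · refine ⟨j, Finset.mem_insert_self j I, ?_⟩
      have hb : b ≠ b + c • (q - p) := by simp [hc.ne', sub_eq_zero, hpq.symm]
      rw [hFj, ← isEdgeDir_smul_iff hc]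
      simpa using isEdgeDir_segment hb

theorem exists_isEdgeDir_of_sum_eq_segment_add_convexHull_of_collinear {ι : Type*}
    (I : Finset ι) {F : ι → Set 𝔼} (hF : ∀ i ∈ I, IsPolytope (F i)) {v w : 𝔼} (hvw : v ≠ w)
    {T : Set 𝔼} (hT : T.Finite) {b₀ : 𝔼} (hb₀ : b₀ ∈ T)
    (hcol : ∀ a ∈ T, a - b₀ ∈ ℝ ∙ (w - v))
    (hsum : ∑ i ∈ I, F i = segment ℝ v w + convexHull ℝ T) : ∃ i ∈ I, IsEdgeDir (F i) (w - v) := by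
  have hline : segment ℝ v w + convexHull ℝ T ⊆ range fun r : ℝ => (v + b₀) + r • (w - v) := by
    rintro _ ⟨x, hx, y, hy, rfl⟩
    have hy' : y ∈ AffineSubspace.mk' b₀ (ℝ ∙ (w - v)) :=
      convexHull_min (fun a ha => AffineSubspace.mem_mk'.2 (hcol a ha)) (AffineSubspace.convex _) hy
    obtain ⟨r, hr⟩ := Submodule.mem_span_singleton.1 (AffineSubspace.mem_mk'.1 hy')
    rw [segment_eq_image'] at hx
    obtain ⟨θ, -, rfl⟩ := hx
    refine ⟨θ + r, ?_⟩
    simp only [add_smul, hr, vsub_eq_sub]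
    abel
  have hvb : v + b₀ ∈ segment ℝ v w + convexHull ℝ T :=
    add_mem_add (left_mem_segment ℝ v w) (subset_convexHull ℝ T hb₀)
  have hwb : w + b₀ ∈ segment ℝ v w + convexHull ℝ T :=
    add_mem_add (right_mem_segment ℝ v w) (subset_convexHull ℝ T hb₀)
  have hcompact : IsCompact (segment ℝ v w + convexHull ℝ T) := by
    rw [← convexHull_pair]
    exact ((toFinite _).isCompact_convexHull ℝ).add (hT.isCompact_convexHull ℝ)
  obtain ⟨b, c, hc, hseg⟩ := exists_eq_segment_of_subset_line ⟨_, hvb⟩ hcompact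
    ((convex_segment v w).add (convex_convexHull ℝ T)) hline
  have hc : 0 < c := by
    refine hc.lt_of_ne fun hc => hvw ?_
    rw [← hc, zero_smul, add_zero, segment_same] at hseg
    rw [hseg] at hvb hwb
    exact add_right_cancel ((mem_singleton_iff.1 hvb).trans (mem_singleton_iff.1 hwb).symm)
  have hb : b ≠ b + c • (w - v) := by simp [hc.ne', sub_eq_zero, hvw.symm]
  obtain ⟨i, hi, hedge⟩ := exists_isEdgeDir_of_sum_eq_segment I hF hb (hsum.trans hseg)
  refine ⟨i, hi, (isEdgeDir_smul_iff hc).1 ?_⟩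
  simpa using hedge

theorem exists_isEdgeDir_of_sum_eq_segment_add_convexHull {ι : Type*} (I : Finset ι)
    {F : ι → Set 𝔼} (hF : ∀ i ∈ I, IsPolytope (F i)) {v w : 𝔼} (hvw : v ≠ w) {T : Set 𝔼}
    (hT : T.Finite) (hTne : T.Nonempty)
    (hsum : ∑ i ∈ I, F i = segment ℝ v w + convexHull ℝ T) : ∃ i ∈ I, IsEdgeDir (F i) (w - v) := by
  induction hn : T.ncard using Nat.strong_induction_on generalizing T F with
  | _ n ih =>
  obtain ⟨b, hb⟩ := hTne
  by_cases hcol : ∀ a ∈ T, a - b ∈ ℝ ∙ (w - v)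
  · exact exists_isEdgeDir_of_sum_eq_segment_add_convexHull_of_collinear I hF hvw hT hb hcol hsum
  obtain ⟨a, ha, hab⟩ := not_forall₂.1 hcol
  obtain ⟨g, hgwv, hg⟩ := geometric_hahn_banach_closed_point_of_add_smul_mem
    (Submodule.convex _) (Submodule.closed_of_finiteDimensional _) hab
    fun c hc t => add_mem hc (Submodule.smul_mem _ t (Submodule.mem_span_singleton_self _))
  have hgab : g b < g a := by simpa using hg 0 (zero_mem _)
  have hsub : g.toExposed T ⊂ T := ⟨sep_subset _ _, fun h => ((h hb).2 a ha).not_gt hgab⟩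
  obtain ⟨i, hi, hedge⟩ := ih _ (hn ▸ ncard_lt_ncard hsub hT) (hF := fun i hi => (hF i hi).toExposed g)
    (hT.subset hsub.1) (g.toExposed_nonempty hT ⟨b, hb⟩)
    (by rw [← g.toExposed_sum, hsum, g.toExposed_add, g.toExposed_segment hgwv,
      g.toExposed_convexHull hT]) rfl
  exact ⟨i, hi, hedge.of_toExposed⟩

end Euclidean

theorem signed_minkowski_sum_edge_directions_general {d r : ℕ}
    (P : Set (EuclideanSpace ℝ (Fin d))) (hP : IsPolytope P)
    (Ps : Fin r → Set (EuclideanSpace ℝ (Fin d))) (hPs : ∀ i, IsPolytope (Ps i))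
    (s : Fin r → ℤ)
    (hsigned : P + ∑ i ∈ Finset.univ.filter (fun i => s i = -1), Ps i =
        ∑ i ∈ Finset.univ.filter (fun i => s i = 1), Ps i) :
    ∀ e, IsEdgeDir P e → ∃ i, s i = 1 ∧ IsEdgeDir (Ps i) e := by
  rintro _ ⟨v, w, ⟨hvw, hext⟩, t, ht, rfl⟩
  obtain ⟨S, -, rfl⟩ := hP
  obtain ⟨l, hl⟩ := exists_toExposed_convexHull_eq_segment S.finite_toSet hext
  obtain ⟨T, hTne, hT⟩ := isPolytope_sum (Finset.univ.filter fun i => s i = -1) fun i _ => hPs i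
  have hface : ∑ i ∈ Finset.univ.filter (fun i => s i = 1), l.toExposed (Ps i) =
      segment ℝ v w + convexHull ℝ (l.toExposed T) := by
    rw [← l.toExposed_sum, ← hsigned, l.toExposed_add, hl, hT,
      l.toExposed_convexHull T.finite_toSet]
  obtain ⟨i, hi, hedge⟩ := exists_isEdgeDir_of_sum_eq_segment_add_convexHull _
    (fun i _ => (hPs i).toExposed l) hvw (T.finite_toSet.subset (sep_subset _ _))
    (l.toExposed_nonempty T.finite_toSet hTne) hface
  exact ⟨i, (Finset.mem_filter.1 hi).2, (isEdgeDir_smul_iff ht).2 hedge.of_toExposed⟩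

theorem signed_minkowski_sum_edge_directions {d r : ℕ}
    (P : Set (EuclideanSpace ℝ (Fin d))) (hP : IsPolytope P)
    (Ps : Fin r → Set (EuclideanSpace ℝ (Fin d))) (hPs : ∀ i, IsPolytope (Ps i))
    (s : Fin r → ℤ) (hs : ∀ i, s i = 1 ∨ s i = -1)
    (hsigned : P + ∑ i ∈ Finset.univ.filter (fun i => s i = -1), Ps i =
        ∑ i ∈ Finset.univ.filter (fun i => s i = 1), Ps i) :
    ∀ e, IsEdgeDir P e → ∃ i, s i = 1 ∧ IsEdgeDir (Ps i) e :=
  signed_minkowski_sum_edge_directions_general P hP Ps hPs s hsigned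
end
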